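/- Let G be a connected graph on vertices v₁,…,vₙ such that the graph G_α (constructed with parameter α as: cliques V_i of size α, complete bipartite graphs between V_i and V_j for edges v_iv_j, pendant vertices u_{i,j} on each v_{i,j}, and vertices w_j adjacent to all u_{i,j}) is minimally 1-tough. Then G is α-critical and α(G) = α. -/

import Mathlib

/-!
Write `v_p`, `u_p`, `w_j` for the clique, pendant and hub vertices of `G_α`.

If `I` is independent in `G` and `|I| > α`, deleting the hubs and the cliques of the rows
outside `I` deletes `(n - |I|) α + α` vertices but leaves `|I| + (n - |I|) α` components, so
`G_α` is not 1-tough; hence `α(G) ≤ α`.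

For an edge `ab` of `G`, the graph `G_α` minus the edge `v_(a,0) v_(b,0)` has a set `S` whose
removal leaves more than `|S|` components. Charging the components without a clique vertex to
vertices of `S`, column by column, shows that at least `α + 1` components contain a clique vertex.
Rows of clique vertices lying in distinct components are distinct and non-adjacent in `G - ab`,
so `α(G - ab) ≥ α + 1`. As deleting an edge raises the independence number by at most one, this
gives both `α(G) = α` and α-criticality.
-/

open SimpleGraph

/-- Number of connected components after deleting vertex set `S`. -/
noncomputable def numComp {V : Type*} (G : SimpleGraph V) (S : Set V) : ℕ :=
  Nat.card (G.induce (Sᶜ : Set V)).ConnectedComponent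

/-- `S` is a cutset: its removal leaves more than one component. -/
def IsCutset {V : Type*} (G : SimpleGraph V) (S : Set V) : Prop :=
  1 < numComp G S

/-- `G` is `t`-tough: every cutset `S` leaves at most `|S|/t` components.
Equivalently `τ(G) ≥ t` (for `t > 0`). -/
def IsTTough {V : Type*} (t : ℚ) (G : SimpleGraph V) : Prop :=
  ∀ S : Set V, IsCutset G S → t * (numComp G S : ℚ) ≤ (Nat.card S : ℚ)

/-- `τ(G) = t`: `G` is `t`-tough and `t` is the largest such value. -/
def ToughnessEq {V : Type*} (G : SimpleGraph V) (t : ℚ) : Prop :=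
  IsTTough t G ∧ ∀ t' : ℚ, IsTTough t' G → t' ≤ t

/-- The toughness of `G` equals `t`, characterized as the minimum of
`|S|/ω(G−S)` over cutsets `S` (valid for connected noncomplete graphs). -/
def ToughnessMin {V : Type*} (G : SimpleGraph V) (t : ℚ) : Prop :=
  IsLeast {q : ℚ | ∃ S : Set V, IsCutset G S ∧
    q = (Nat.card S : ℚ) / (numComp G S : ℚ)} t

/-- `G` is minimally `t`-tough. -/
def MinTough {V : Type*} (t : ℚ) (G : SimpleGraph V) : Prop :=
  ToughnessEq G t ∧ ∀ e ∈ G.edgeSet, ¬ IsTTough t (G.deleteEdges {e})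

/-- `G` is almost minimally 1-tough: `τ(G) ≥ 1` and `τ(G−e) < 1` for all edges. -/
def AlmostMinOneTough {V : Type*} (G : SimpleGraph V) : Prop :=
  IsTTough 1 G ∧ ∀ e ∈ G.edgeSet, ¬ IsTTough 1 (G.deleteEdges {e})

/-- The independence number of `G`. -/
noncomputable def indepNum {V : Type*} [Fintype V] (G : SimpleGraph V) : ℕ :=
  sSup {n | ∃ s : Set V, s.Pairwise (fun x y => ¬ G.Adj x y) ∧ Nat.card s = n}

/-- `G` is α-critical: deleting any edge increases the independence number. -/
def AlphaCritical {V : Type*} [Fintype V] (G : SimpleGraph V) : Prop :=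
  ∀ e ∈ G.edgeSet, _root_.indepNum G < _root_.indepNum (G.deleteEdges {e})

/-- The construction `G_α`: each vertex `i` of `G` is replaced by a clique
`V_i = {i} × Fin α`; edges of `G` become complete bipartite graphs between the
corresponding cliques; each `v_{i,j}` gets a pendant neighbor `u_{i,j}`; and
each hub vertex `w_j` is adjacent to all `u_{i,j}`. -/
def Galpha {V : Type*} (G : SimpleGraph V) (α : ℕ) :
    SimpleGraph ((V × Fin α) ⊕ ((V × Fin α) ⊕ Fin α)) :=
  SimpleGraph.fromRel (fun x y =>
    match x, y with
    | Sum.inl p, Sum.inl q => p.1 = q.1 ∨ G.Adj p.1 q.1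
    | Sum.inl p, Sum.inr (Sum.inl q) => p = q
    | Sum.inr (Sum.inl p), Sum.inr (Sum.inr j) => p.2 = j
    | _, _ => False)

open Function

section Toughness

variable {X : Type*} {H : SimpleGraph X} {S : Set X}

lemma IsTTough.numComp_le (hH : IsTTough 1 H) (hS : IsCutset H S) :
    numComp H S ≤ Nat.card S := by
  exact_mod_cast (one_mul (numComp H S : ℚ)) ▸ hH S hS

lemma exists_isCutset_card_lt_of_not_isTTough (hH : ¬ IsTTough 1 H) :
    ∃ S, IsCutset H S ∧ Nat.card S < numComp H S := by
  simpa [IsTTough] using hH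

lemma isTTough_of_isEmpty [IsEmpty X] (t : ℚ) (H : SimpleGraph X) : IsTTough t H := by
  intro S hS
  simp [IsCutset, numComp] at hS

lemma ToughnessEq.nonempty {t : ℚ} (h : ToughnessEq H t) : Nonempty X := by
  by_contra hX
  rw [not_nonempty_iff] at hX
  linarith [h.2 (t + 1) (isTTough_of_isEmpty _ H)]

lemma card_le_numComp [Finite X] {β γ : Type*} (c : X → γ)
    (hc : ∀ x y, x ∉ S → y ∉ S → H.Adj x y → c x = c y) (g : β → X) (hg : ∀ b, g b ∉ S)
    (hinj : Injective (c ∘ g)) : Nat.card β ≤ numComp H S := by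
  have hwalk {x y : ↥Sᶜ} (p : (H.induce Sᶜ).Walk x y) : c x = c y := by
    induction p with
    | nil => rfl
    | @cons u v _ hxy _ ih => exact (hc u v u.2 v.2 hxy).trans ih
  let c' : (H.induce Sᶜ).ConnectedComponent → γ :=
    ConnectedComponent.lift (fun x => c x) fun _ _ p _ => hwalk p
  refine Nat.card_le_card_of_injective
    (fun b => (H.induce Sᶜ).connectedComponentMk ⟨g b, hg b⟩) fun b b' hbb' => hinj ?_
  exact congrArg c' hbb'

end Toughness

section IndepNum

variable {V : Type*} [Fintype V] {G : SimpleGraph V}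

lemma le_indepNum {s : Set V} (hs : s.Pairwise fun x y => ¬ G.Adj x y) :
    Nat.card s ≤ _root_.indepNum G := by
  refine le_csSup ⟨Fintype.card V, ?_⟩ ⟨s, hs, rfl⟩
  rintro n ⟨t, -, rfl⟩
  simpa using Nat.card_le_card_of_injective _ (Subtype.val_injective (p := (· ∈ t)))

lemma indepNum_le {m : ℕ}
    (h : ∀ s : Set V, s.Pairwise (fun x y => ¬ G.Adj x y) → Nat.card s ≤ m) :
    _root_.indepNum G ≤ m := by
  refine csSup_le ⟨0, ∅, by simp, by simp⟩ ?_
  rintro n ⟨s, hs, rfl⟩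
  exact h s hs

lemma indepNum_deleteEdges_le (e : Sym2 V) :
    _root_.indepNum (G.deleteEdges {e}) ≤ _root_.indepNum G + 1 := by
  induction e using Sym2.ind with | h a b => ?_
  refine indepNum_le fun s hs => ?_
  have hsa : (s \ {a}).Pairwise fun x y => ¬ G.Adj x y := by
    rintro x ⟨hx, hxa⟩ y ⟨hy, hya⟩ hxy hadj
    refine hs hx hy hxy (deleteEdges_adj.mpr ⟨hadj, fun he => ?_⟩)
    rcases Sym2.eq_iff.mp he with ⟨rfl, -⟩ | ⟨-, rfl⟩
    exacts [hxa rfl, hya rfl]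
  have := le_indepNum hsa
  rw [Nat.card_coe_set_eq] at this ⊢
  have := Set.ncard_le_ncard_sdiff_add_ncard s {a}
  simp only [Set.ncard_singleton] at this
  omega

end IndepNum

section Galpha

/-- Vertices of `Galpha G α`: `inl p` is `v_p`, `inr (inl p)` is `u_p`, `inr (inr j)` is `w_j`. -/
abbrev GalphaVert (V : Type*) (α : ℕ) : Type _ := (V × Fin α) ⊕ ((V × Fin α) ⊕ Fin α)

variable {V : Type*} {G : SimpleGraph V} {α : ℕ}

lemma galpha_adj_inl_inl {p q : V × Fin α} :
    (Galpha G α).Adj (.inl p) (.inl q) ↔ p ≠ q ∧ (p.1 = q.1 ∨ G.Adj p.1 q.1) := by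
  simp only [Galpha, fromRel_adj, Sum.inl.injEq, ne_eq, and_congr_right_iff]
  exact fun _ => ⟨fun h => h.elim id (Or.imp Eq.symm G.adj_symm), Or.inl⟩

lemma pos_of_minTough_galpha (h : MinTough 1 (Galpha G α)) : 0 < α := by
  obtain ⟨p | p | j⟩ := h.1.nonempty
  exacts [p.2.pos, p.2.pos, j.pos]

lemma card_le_of_isTTough_galpha [Finite V] (hα : 0 < α) (hT : IsTTough 1 (Galpha G α)) {I : Set V}
    (hI : I.Pairwise fun x y => ¬ G.Adj x y) : Nat.card I ≤ α := by
  classical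
  by_contra! hk
  let f : (↥Iᶜ × Fin α) ⊕ Fin α → GalphaVert V α :=
    Sum.elim (fun p => .inl (p.1, p.2)) (fun j => .inr (.inr j))
  have hf : Injective f := by
    rintro (⟨⟨i, hi⟩, j⟩ | j) (⟨⟨i', hi'⟩, j'⟩ | j') h <;> simp_all [f]
  let S := Set.range f
  have hS : Nat.card S = Nat.card ↥Iᶜ * α + α := by
    simp [S, Nat.card_range_of_injective hf, Nat.card_sum, Nat.card_prod]
  have hSv (p : V × Fin α) : .inl p ∉ S ↔ p.1 ∈ I := by simp [S, f, Prod.ext_iff]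
  have hSu (p : V × Fin α) : .inr (.inl p) ∉ S := by simp [S, f]
  have hSw (j : Fin α) : .inr (.inr j) ∈ S := ⟨.inr j, rfl⟩
  -- the rows of `I` keep their cliques with pendant `u`'s; every other `u` becomes isolated
  let c : GalphaVert V α → V ⊕ GalphaVert V α
    | .inl p => .inl p.1
    | .inr (.inl p) => if p.1 ∈ I then .inl p.1 else .inr (.inr (.inl p))
    | .inr (.inr j) => .inr (.inr (.inr j))
  let g : ↥I ⊕ (↥Iᶜ × Fin α) → GalphaVert V α :=
    Sum.elim (fun i => .inl (i, ⟨0, hα⟩)) (fun p => .inr (.inl (p.1, p.2)))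
  have hc : ∀ x y, x ∉ S → y ∉ S → (Galpha G α).Adj x y → c x = c y := by
    rintro (p | p | j) (q | q | j) hx hy hxy <;> try simp only [hSw, not_true_eq_false] at hx hy
    · rw [hSv] at hx hy
      obtain ⟨hpq, hrow | hadj⟩ := galpha_adj_inl_inl.mp hxy
      · simp [c, hrow]
      · exact absurd hadj (hI hx hy fun h => hpq (by simp_all))
    · obtain rfl : p = q := by simpa [Galpha] using hxy
      simp [c, (hSv _).mp hx]
    · obtain rfl : p = q := by simpa [Galpha, eq_comm] using hxy
      simp [c, (hSv _).mp hy]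
    · simp [Galpha] at hxy
  have hg : ∀ b, g b ∉ S := by
    rintro (⟨i, hi⟩ | ⟨⟨i, hi⟩, j⟩)
    exacts [(hSv _).mpr hi, hSu _]
  have hcg : Injective (c ∘ g) := by
    rintro (⟨i, hi⟩ | ⟨⟨i, hi : i ∉ I⟩, j⟩) (⟨i', hi'⟩ | ⟨⟨i', hi' : i' ∉ I⟩, j'⟩) h <;>
      simp [c, g, hi, hi'] at h <;> simp [h]
  have hcomp := card_le_numComp c hc g hg hcg
  rw [Nat.card_sum, Nat.card_prod, Nat.card_eq_fintype_card (α := Fin α), Fintype.card_fin] at hcomp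
  have := hT.numComp_le (S := S) (by unfold IsCutset; omega)
  omega

lemma not_isTTough_galpha_of_subsingleton [Subsingleton V] (a : V) (hα : 0 < α) :
    ¬ IsTTough 1 (Galpha G α) := by
  intro hT
  have : Unique V := uniqueOfSubsingleton a
  let S : Set (GalphaVert V α) := Set.range fun p => .inr (.inl p)
  have hS : Nat.card S = α := by
    rw [Nat.card_range_of_injective fun p q h => by simpa using h]
    simp
  -- once the `u`'s are removed, each hub is isolated and the clique `V_a` is one more component
  let c : GalphaVert V α → Option (Fin α)
    | .inr (.inr j) => some j
    | _ => none
  let g : Option (Fin α) → GalphaVert V α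
    | none => .inl (a, ⟨0, hα⟩)
    | some j => .inr (.inr j)
  have hc : ∀ x y, x ∉ S → y ∉ S → (Galpha G α).Adj x y → c x = c y := by
    rintro (p | p | j) (q | q | j') hx hy hxy <;> first | rfl | simp [S, Galpha] at hx hy hxy
  have hg : ∀ b, g b ∉ S := by
    rintro (_ | j) <;> simp [S, g]
  have hcg : Injective (c ∘ g) := by
    rintro (_ | j) (_ | j') h <;> simp_all [c, g]
  have hcomp := card_le_numComp c hc g hg hcg
  simp only [Nat.card_eq_fintype_card, Fintype.card_option, Fintype.card_fin] at hcomp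
  have := hT.numComp_le (S := S) (by unfold IsCutset; omega)
  omega

end Galpha

section Columns

/-! Column `j` of `Galpha G α` is the hub `w_j` together with its legs `w_j - u_p - v_p`,
`p.2 = j`. -/

variable {V : Type*} {α : ℕ} (S : Set (GalphaVert V α))

def IsIsolatedLeaf (p : V × Fin α) : Prop :=
  .inr (.inl p) ∉ S ∧ .inl p ∈ S ∧ .inr (.inr p.2) ∈ S

def IsCutOffHub (j : Fin α) : Prop :=
  .inr (.inr j) ∉ S ∧ ∀ i, .inr (.inl (i, j)) ∈ S ∨ .inl (i, j) ∈ S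

def IsIntactColumn (j : Fin α) : Prop :=
  .inr (.inr j) ∉ S ∧ ∀ i, .inr (.inl (i, j)) ∉ S ∧ .inl (i, j) ∉ S

open Classical in
noncomputable def legCut (p : V × Fin α) : GalphaVert V α :=
  if .inr (.inl p) ∈ S then .inr (.inl p) else .inl p

variable {S} {p q : V × Fin α} {j : Fin α}

lemma IsIsolatedLeaf.not_isIntactColumn (h : IsIsolatedLeaf S p) : ¬ IsIntactColumn S p.2 :=
  fun hj => hj.1 h.2.2

lemma IsCutOffHub.not_isIntactColumn [Nonempty V] (h : IsCutOffHub S j) :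
    ¬ IsIntactColumn S j := by
  obtain ⟨i⟩ := ‹Nonempty V›
  exact fun hj => (h.2 i).elim (hj.2 i).1 (hj.2 i).2

lemma legCut_mem (h : .inr (.inl p) ∈ S ∨ .inl p ∈ S) : legCut S p ∈ S := by
  unfold legCut
  split_ifs with hu
  exacts [hu, h.resolve_left hu]

lemma eq_of_legCut_eq (h : legCut S p = legCut S q) : p = q := by
  unfold legCut at h
  split_ifs at h <;> simpa using h

lemma eq_of_legCut_eq_inl (h : legCut S p = .inl q) : p = q := by
  unfold legCut at h
  split_ifs at h
  simpa using h

lemma legCut_ne_inr_inr : legCut S p ≠ .inr (.inr j) := by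
  unfold legCut
  split_ifs <;> simp

variable (S) in
/-- Charging: an isolated leaf `u_p` pays with `v_p`; a column that is not intact pays with its
hub or with a cut leg, and a cut-off hub with a second cut leg of its column. -/
lemma card_isolatedLeaf_add_card_cutOffHub_add_card_not_intact_le [Finite V] [Nontrivial V] :
    Nat.card {p // IsIsolatedLeaf S p} + Nat.card {j // IsCutOffHub S j} +
      Nat.card {j // ¬ IsIntactColumn S j} ≤ Nat.card S := by
  let r₁ (j : Fin α) : V :=
    Classical.epsilon fun i => .inr (.inl (i, j)) ∈ S ∨ .inl (i, j) ∈ S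
  let r₂ (j : Fin α) : V := Classical.epsilon fun i => i ≠ r₁ j
  have hr₁ (j : Fin α) (h : ∃ i, .inr (.inl (i, j)) ∈ S ∨ .inl (i, j) ∈ S) :
      .inr (.inl (r₁ j, j)) ∈ S ∨ .inl (r₁ j, j) ∈ S :=
    Classical.epsilon_spec h
  have hr₂ (j : Fin α) : r₂ j ≠ r₁ j := Classical.epsilon_spec (exists_ne (r₁ j))
  open Classical in
  let f₃ (j : Fin α) : GalphaVert V α :=
    if .inr (.inr j) ∈ S then .inr (.inr j) else legCut S (r₁ j, j)
  let f : ({p // IsIsolatedLeaf S p} ⊕ {j // IsCutOffHub S j}) ⊕ {j // ¬ IsIntactColumn S j} →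
      GalphaVert V α :=
    Sum.elim (Sum.elim (fun p => .inl p.1) (fun j => legCut S (r₂ j, j))) (fun j => f₃ j)
  have hf : ∀ z, f z ∈ S := by
    rintro ((⟨p, hp⟩ | ⟨j, hj⟩) | ⟨j, hj⟩)
    · exact hp.2.1
    · exact legCut_mem (hj.2 _)
    · show f₃ j ∈ S
      unfold f₃
      split_ifs with hw
      · exact hw
      · refine legCut_mem (hr₁ j ?_)
        simpa [IsIntactColumn, hw, or_iff_not_imp_left] using hj
  have hinj : Injective f := by
    refine (Injective.sumElim ?_ ?_ ?_).sumElim ?_ ?_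
    · rintro ⟨p, hp⟩ ⟨q, hq⟩ h
      simpa using h
    · rintro ⟨j, hj⟩ ⟨j', hj'⟩ h
      simpa using congrArg Prod.snd (eq_of_legCut_eq h)
    · rintro ⟨p, hp⟩ ⟨j, hj⟩ h
      obtain rfl := eq_of_legCut_eq_inl h.symm
      exact hj.1 hp.2.2
    · rintro ⟨j, hj⟩ ⟨j', hj'⟩ h
      simp only [f₃] at h
      split_ifs at h
      · simpa using h
      · exact absurd h.symm legCut_ne_inr_inr
      · exact absurd h legCut_ne_inr_inr
      · simpa using congrArg Prod.snd (eq_of_legCut_eq h)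
    · rintro (⟨p, hp⟩ | ⟨j, hj⟩) ⟨j', hj'⟩ h <;>
        simp only [f₃, Sum.elim_inl, Sum.elim_inr] at h <;> split_ifs at h with hw
      · obtain rfl := eq_of_legCut_eq_inl h.symm
        exact hw hp.2.2
      · exact legCut_ne_inr_inr h
      · obtain ⟨hr, rfl⟩ := Prod.ext_iff.mp (eq_of_legCut_eq h)
        exact hr₂ _ hr
  have := Nat.card_le_card_of_injective _ (hinj.codRestrict hf)
  simpa [Nat.card_sum] using this

end Columns

section DeletedEdge

variable {V : Type*} {G : SimpleGraph V} {α : ℕ} {p₀ q₀ : V × Fin α}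
  {H : SimpleGraph (GalphaVert V α)} {S : Set (GalphaVert V α)} {p q : V × Fin α}

variable (G α p₀ q₀) in
def galphaDeleteEdge : SimpleGraph (GalphaVert V α) :=
  (Galpha G α).deleteEdges {s(.inl p₀, .inl q₀)}

lemma adj_inr_inl_inl (hH : galphaDeleteEdge G α p₀ q₀ ≤ H) :
    H.Adj (.inr (.inl p)) (.inl p) :=
  hH (by simp [galphaDeleteEdge, Galpha])

lemma adj_inr_inl_inr_inr (hH : galphaDeleteEdge G α p₀ q₀ ≤ H) :
    H.Adj (.inr (.inl p)) (.inr (.inr p.2)) :=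
  hH (by simp [galphaDeleteEdge, Galpha])

lemma adj_inl_inl (hH : galphaDeleteEdge G α p₀ q₀ ≤ H)
    (hrow : p₀.1 ≠ q₀.1) (hpq : p ≠ q)
    (h : p.1 = q.1 ∨ (G.deleteEdges {s(p₀.1, q₀.1)}).Adj p.1 q.1) :
    H.Adj (.inl p) (.inl q) := by
  refine hH (deleteEdges_adj.mpr ⟨galpha_adj_inl_inl.mpr ⟨hpq, h.imp_right fun h => h.1⟩, ?_⟩)
  rw [Set.mem_singleton_iff, Sym2.eq_iff]
  simp only [Sum.inl.injEq]
  rintro (⟨rfl, rfl⟩ | ⟨rfl, rfl⟩) <;> rcases h with h | h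
  exacts [hrow h, (deleteEdges_adj.mp h).2 rfl, hrow h.symm, (deleteEdges_adj.mp h).2 Sym2.eq_swap]

variable (H S) in
abbrev compOf (x : GalphaVert V α) (hx : x ∉ S) : (H.induce Sᶜ).ConnectedComponent :=
  (H.induce Sᶜ).connectedComponentMk ⟨x, hx⟩

lemma compOf_eq_of_adj {x y : GalphaVert V α} {hx : x ∉ S} {hy : y ∉ S} (h : H.Adj x y) :
    compOf H S x hx = compOf H S y hy :=
  ConnectedComponent.sound (Adj.reachable (by simpa using h))

def HasCliqueVertex (C : (H.induce Sᶜ).ConnectedComponent) : Prop :=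
  ∃ p, ∃ hp : .inl p ∉ S, compOf H S (.inl p) hp = C

lemma compOf_inl_eq (hH : galphaDeleteEdge G α p₀ q₀ ≤ H)
    (hrow : p₀.1 ≠ q₀.1) (hp : .inl p ∉ S) (hq : .inl q ∉ S)
    (h : p.1 = q.1 ∨ (G.deleteEdges {s(p₀.1, q₀.1)}).Adj p.1 q.1) :
    compOf H S (.inl p) hp = compOf H S (.inl q) hq := by
  by_cases hpq : p = q
  · subst hpq
    rfl
  · exact compOf_eq_of_adj (adj_inl_inl hH hrow hpq h)

lemma card_hasCliqueVertex_le_indepNum [Fintype V]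
    (hH : galphaDeleteEdge G α p₀ q₀ ≤ H) (hrow : p₀.1 ≠ q₀.1) :
    Nat.card {C : (H.induce Sᶜ).ConnectedComponent // HasCliqueVertex C} ≤
      _root_.indepNum (G.deleteEdges {s(p₀.1, q₀.1)}) := by
  choose p hp hpC using fun C : {C : (H.induce Sᶜ).ConnectedComponent // HasCliqueVertex C} => C.2
  have key : ∀ C C', (p C).1 = (p C').1 ∨ (G.deleteEdges {s(p₀.1, q₀.1)}).Adj (p C).1 (p C').1 →
      C = C' := fun C C' h =>
    Subtype.ext ((hpC C).symm.trans ((compOf_inl_eq hH hrow _ _ h).trans (hpC C')))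
  have hinj : Injective fun C => (p C).1 := fun C C' h => key C C' (Or.inl h)
  rw [← Nat.card_range_of_injective hinj]
  refine le_indepNum ?_
  rintro _ ⟨C, rfl⟩ _ ⟨C', rfl⟩ hne hadj
  exact hne (congrArg (fun C => (p C).1) (key C C' (Or.inr hadj)))

lemma subsingleton_hasCliqueVertex (hH : galphaDeleteEdge G α p₀ q₀ ≤ H)
    (hrow : p₀.1 ≠ q₀.1) {j : Fin α} (hj : IsIntactColumn S j) :
    Subsingleton {C : (H.induce Sᶜ).ConnectedComponent // HasCliqueVertex C} := by
  have hw (p : V × Fin α) (hp : .inl p ∉ S) :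
      compOf H S (.inl p) hp = compOf H S (.inr (.inr j)) hj.1 :=
    calc compOf H S (.inl p) hp = compOf H S (.inl (p.1, j)) (hj.2 p.1).2 :=
          compOf_inl_eq hH hrow _ _ (Or.inl rfl)
      _ = compOf H S (.inr (.inl (p.1, j))) (hj.2 p.1).1 :=
          (compOf_eq_of_adj (adj_inr_inl_inl hH)).symm
      _ = _ := compOf_eq_of_adj (adj_inr_inl_inr_inr hH)
  constructor
  rintro ⟨C, p, hp, rfl⟩ ⟨C', p', hp', rfl⟩
  exact Subtype.ext ((hw p hp).trans (hw p' hp').symm)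

lemma isCutOffHub_of_not_hasCliqueVertex
    (hH : galphaDeleteEdge G α p₀ q₀ ≤ H) {j : Fin α}
    (hw : .inr (.inr j) ∉ S) (h : ¬ HasCliqueVertex (compOf H S _ hw)) : IsCutOffHub S j := by
  refine ⟨hw, fun i => ?_⟩
  by_contra! hi
  exact h ⟨(i, j), hi.2, (compOf_eq_of_adj (adj_inr_inl_inl hH)).symm.trans
    (compOf_eq_of_adj (adj_inr_inl_inr_inr hH) : compOf H S _ hi.1 = _)⟩

lemma numComp_le_card_hasCliqueVertex_add [Finite V] (hH : galphaDeleteEdge G α p₀ q₀ ≤ H) :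
    numComp H S ≤ Nat.card {C : (H.induce Sᶜ).ConnectedComponent // HasCliqueVertex C} +
      (Nat.card {p // IsIsolatedLeaf S p} + Nat.card {j // IsCutOffHub S j}) := by
  let F : {C : (H.induce Sᶜ).ConnectedComponent // HasCliqueVertex C} ⊕
      ({p // IsIsolatedLeaf S p} ⊕ {j // IsCutOffHub S j}) → (H.induce Sᶜ).ConnectedComponent :=
    Sum.elim Subtype.val (Sum.elim (fun p => compOf H S _ p.2.1) (fun j => compOf H S _ j.2.1))
  have hF : Surjective F := by
    refine ConnectedComponent.ind fun ⟨x, hx⟩ => ?_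
    by_cases hC : HasCliqueVertex (compOf H S x hx)
    · exact ⟨.inl ⟨_, hC⟩, rfl⟩
    rcases x with p | p | j
    · exact absurd ⟨p, hx, rfl⟩ hC
    · by_cases hw : .inr (.inr p.2) ∈ S
      · have hv : .inl p ∈ S := by
          by_contra hv
          exact hC ⟨p, hv, (compOf_eq_of_adj (adj_inr_inl_inl hH)).symm⟩
        exact ⟨.inr (.inl ⟨p, hx, hv, hw⟩), rfl⟩
      · have heq : compOf H S _ hx = compOf H S _ hw := compOf_eq_of_adj (adj_inr_inl_inr_inr hH)
        rw [heq] at hC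
        exact ⟨.inr (.inr ⟨p.2, isCutOffHub_of_not_hasCliqueVertex hH hw hC⟩), heq.symm⟩
    · exact ⟨.inr (.inr ⟨j, isCutOffHub_of_not_hasCliqueVertex hH hx hC⟩), rfl⟩
  simpa [numComp, Nat.card_sum] using Nat.card_le_card_of_surjective F hF

lemma numComp_le_card_of_isIntactColumn [Finite V]
    (hH : galphaDeleteEdge G α p₀ q₀ ≤ H) (hrow : p₀.1 ≠ q₀.1) {j : Fin α}
    (hj : IsIntactColumn S j) (hcut : IsCutset H S) : numComp H S ≤ Nat.card S := by
  have : Nontrivial V := ⟨_, _, hrow⟩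
  have hcomp := numComp_le_card_hasCliqueVertex_add hH (S := S)
  have hS := card_isolatedLeaf_add_card_cutOffHub_add_card_not_intact_le S
  have h1 := Finite.card_le_one_iff_subsingleton.mpr (subsingleton_hasCliqueVertex hH hrow hj)
  have : Nonempty {j // ¬ IsIntactColumn S j} := by
    by_contra hempty
    rw [not_nonempty_iff] at hempty
    have : IsEmpty {p // IsIsolatedLeaf S p} := ⟨fun p => hempty.false ⟨_, p.2.not_isIntactColumn⟩⟩
    have : IsEmpty {j // IsCutOffHub S j} := ⟨fun j => hempty.false ⟨_, j.2.not_isIntactColumn⟩⟩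
    simp only [Nat.card_of_isEmpty] at hcomp
    unfold IsCutset at hcut
    omega
  have := Nat.card_pos (α := {j // ¬ IsIntactColumn S j})
  omega

theorem succ_le_indepNum_of_not_isTTough [Fintype V] (hH : galphaDeleteEdge G α p₀ q₀ ≤ H)
    (hrow : p₀.1 ≠ q₀.1) (hT : ¬ IsTTough 1 H) :
    α + 1 ≤ _root_.indepNum (G.deleteEdges {s(p₀.1, q₀.1)}) := by
  have : Nontrivial V := ⟨_, _, hrow⟩
  obtain ⟨S, hcut, hlt⟩ := exists_isCutset_card_lt_of_not_isTTough hT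
  by_cases hint : ∃ j, IsIntactColumn S j
  · obtain ⟨j, hj⟩ := hint
    exact absurd (numComp_le_card_of_isIntactColumn hH hrow hj hcut) hlt.not_ge
  have hα : Nat.card {j // ¬ IsIntactColumn S j} = α := by simp [not_exists.mp hint]
  have hcomp := numComp_le_card_hasCliqueVertex_add hH (S := S)
  have hS := card_isolatedLeaf_add_card_cutOffHub_add_card_not_intact_le S
  have hV := card_hasCliqueVertex_le_indepNum hH hrow (S := S)
  omega

end DeletedEdge

theorem stmt12 {V : Type*} [Fintype V] (G : SimpleGraph V) (α : ℕ)
    (hconn : G.Connected) (hmin : MinTough 1 (Galpha G α)) :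
    AlphaCritical G ∧ _root_.indepNum G = α := by
  have hα : 0 < α := pos_of_minTough_galpha hmin
  have hT : IsTTough 1 (Galpha G α) := hmin.1.1
  have hcrit (a b : V) (hab : G.Adj a b) : α + 1 ≤ _root_.indepNum (G.deleteEdges {s(a, b)}) :=
    succ_le_indepNum_of_not_isTTough (p₀ := (a, ⟨0, hα⟩)) (q₀ := (b, ⟨0, hα⟩)) le_rfl hab.ne
      (hmin.2 _ (galpha_adj_inl_inl.mpr ⟨by simp [hab.ne], Or.inr hab⟩))
  have hle : _root_.indepNum G ≤ α := indepNum_le fun I hI => card_le_of_isTTough_galpha hα hT hI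
  obtain ⟨a⟩ := hconn.nonempty
  have : Nontrivial V := by
    by_contra h
    rw [not_nontrivial_iff_subsingleton] at h
    exact not_isTTough_galpha_of_subsingleton a hα hT
  obtain ⟨b, hab⟩ := hconn.preconnected.exists_adj_of_nontrivial a
  have heq : _root_.indepNum G = α := by
    have := hcrit a b hab
    have := indepNum_deleteEdges_le (G := G) s(a, b)
    omega
  refine ⟨fun e he => ?_, heq⟩
  induction e using Sym2.ind with | h a b => ?_
  have := hcrit a b he
  omega
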